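/- arXiv:2506.07995 — 4 statements merged into one kernel-verified Lean document; each statement's English description precedes it below -/
import Mathlib

section
/- For a unit vector ψ in a complex Hilbert space and self-adjoint operators H_I, H_J, the Hilbert–Schmidt inner product Tr([H_I, |ψ⟩⟨ψ|]† [H_J, |ψ⟩⟨ψ|]) equals 2·Cov_ψ(H_I,H_J), where Cov_ψ(A,B) := ⟨ψ,{A,B}ψ⟩ − ⟨ψ,Aψ⟩⟨ψ,Bψ⟩ and {A,B} = (AB+BA)/2. -/
/-!
STATEMENT 4: for a unit vector `ψ` in a finite-dimensional complex Hilbert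
space and self-adjoint operators `H_I, H_J`,
`Tr([H_I, |ψ⟩⟨ψ|]† [H_J, |ψ⟩⟨ψ|]) = 2·Cov_ψ(H_I, H_J)`, where
`Cov_ψ(A,B) = ⟨ψ, {A,B} ψ⟩ − ⟨ψ, A ψ⟩⟨ψ, B ψ⟩` and `{A,B} = (AB + BA)/2`.
-/

noncomputable section

/-- The rank-one projection `|ψ⟩⟨ψ| : x ↦ ⟨ψ, x⟩ • ψ`. -/
noncomputable def ketbra {V : Type*} [NormedAddCommGroup V] [InnerProductSpace ℂ V]
    (ψ : V) : V →ₗ[ℂ] V :=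
  LinearMap.smulRight (innerₛₗ ℂ ψ) ψ

@[simp] lemma ketbra_apply {V : Type*} [NormedAddCommGroup V] [InnerProductSpace ℂ V]
    (ψ x : V) : ketbra ψ x = (inner ℂ ψ x : ℂ) • ψ := rfl

lemma trace_comp_ketbra {V : Type*} [NormedAddCommGroup V] [InnerProductSpace ℂ V]
    [FiniteDimensional ℂ V] (ψ : V) (A : V →ₗ[ℂ] V) :
    LinearMap.trace ℂ V (A * ketbra ψ) = (inner ℂ ψ (A ψ) : ℂ) := by
  have h : A * ketbra ψ = dualTensorHom ℂ V V ((innerₛₗ ℂ ψ) ⊗ₜ (A ψ)) := by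
    ext x
    simp [Module.End.mul_apply, dualTensorHom_apply]
  rw [h, LinearMap.trace_eq_contract_apply, contractLeft_apply]
  rfl

lemma ketbra_comp_ketbra {V : Type*} [NormedAddCommGroup V] [InnerProductSpace ℂ V]
    (ψ : V) (hψ : ‖ψ‖ = 1) : ketbra ψ * ketbra ψ = ketbra ψ := by
  ext x
  simp [Module.End.mul_apply, inner_smul_right, inner_self_eq_norm_sq_to_K, hψ, smul_smul]

lemma ketbra_conj {V : Type*} [NormedAddCommGroup V] [InnerProductSpace ℂ V]
    (ψ : V) (A : V →ₗ[ℂ] V) :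
    ketbra ψ * A * ketbra ψ = (inner ℂ ψ (A ψ) : ℂ) • ketbra ψ := by
  ext x
  simp [Module.End.mul_apply, inner_smul_right, smul_smul, mul_comm]

lemma ketbra_isSymmetric {V : Type*} [NormedAddCommGroup V] [InnerProductSpace ℂ V]
    (ψ : V) : (ketbra ψ).IsSymmetric := by
  intro x y
  simp [inner_smul_left, inner_smul_right]
  ring

theorem trace_comm_ketbra_eq_two_cov {V : Type*}
    [NormedAddCommGroup V] [InnerProductSpace ℂ V] [FiniteDimensional ℂ V]
    (ψ : V) (hψ : ‖ψ‖ = 1) (HI HJ : V →ₗ[ℂ] V)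
    (hI : HI.IsSymmetric) (hJ : HJ.IsSymmetric) :
    LinearMap.trace ℂ V
        ((LinearMap.adjoint (HI ∘ₗ ketbra ψ - ketbra ψ ∘ₗ HI)) ∘ₗ
          (HJ ∘ₗ ketbra ψ - ketbra ψ ∘ₗ HJ)) =
      2 * (inner ℂ ψ ((((1 : ℂ)/2) • (HI ∘ₗ HJ + HJ ∘ₗ HI)) ψ) -
        inner ℂ ψ (HI ψ) * inner ℂ ψ (HJ ψ)) := by
  set P := ketbra ψ with hP
  have hIadj : LinearMap.adjoint HI = HI :=
    ((LinearMap.isSymmetric_iff_isSelfAdjoint HI).mp hI)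
  have hPadj : LinearMap.adjoint P = P :=
    ((LinearMap.isSymmetric_iff_isSelfAdjoint P).mp (ketbra_isSymmetric ψ))
  have hadj : LinearMap.adjoint (HI ∘ₗ P - P ∘ₗ HI) = P * HI - HI * P := by
    rw [map_sub, LinearMap.adjoint_comp, LinearMap.adjoint_comp, hIadj, hPadj]
    rfl
  rw [hadj]
  have hcomp : (P * HI - HI * P) ∘ₗ (HJ ∘ₗ P - P ∘ₗ HJ)
      = P * (HI * HJ * P) - (inner ℂ ψ (HI ψ) : ℂ) • (P * HJ)
        - (inner ℂ ψ (HJ ψ) : ℂ) • (HI * P) + HI * (P * HJ) := by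
    have e1 : P * HI * P = (inner ℂ ψ (HI ψ) : ℂ) • P := ketbra_conj ψ HI
    have e2 : P * HJ * P = (inner ℂ ψ (HJ ψ) : ℂ) • P := ketbra_conj ψ HJ
    have e3 : P * P = P := ketbra_comp_ketbra ψ hψ
    change (P * HI - HI * P) * (HJ * P - P * HJ) = _
    have expand : (P * HI - HI * P) * (HJ * P - P * HJ)
        = P * (HI * HJ * P) - (P * HI * P) * HJ - HI * (P * HJ * P) + HI * (P * P) * HJ := by
      noncomm_ring
    rw [expand, e1, e2, e3]
    rw [smul_mul_assoc, mul_smul_comm]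
    noncomm_ring
  rw [hcomp]
  have tA : ∀ A : V →ₗ[ℂ] V, LinearMap.trace ℂ V (A * P) = (inner ℂ ψ (A ψ) : ℂ) :=
    fun A => trace_comp_ketbra ψ A
  have t1 : LinearMap.trace ℂ V (P * (HI * HJ * P)) = (inner ℂ ψ ((HI * HJ) ψ) : ℂ) := by
    rw [LinearMap.trace_mul_comm, show HI * HJ * P * P = HI * HJ * (P * P) from mul_assoc _ _ _,
      ketbra_comp_ketbra ψ hψ, tA]
  have t4 : LinearMap.trace ℂ V (HI * (P * HJ)) = (inner ℂ ψ ((HJ * HI) ψ) : ℂ) := by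
    rw [LinearMap.trace_mul_comm, show P * HJ * HI = P * (HJ * HI) from mul_assoc _ _ _,
      LinearMap.trace_mul_comm, tA]
  simp only [map_add, map_sub, map_smul, t1, t4, tA]
  have hBJ : LinearMap.trace ℂ V (P * HJ) = (inner ℂ ψ (HJ ψ) : ℂ) := by
    rw [LinearMap.trace_mul_comm, tA]
  rw [hBJ]
  simp only [Module.End.mul_apply, LinearMap.smul_apply, LinearMap.add_apply,
    LinearMap.comp_apply, inner_smul_right, inner_add_right, smul_eq_mul]
  ring
end
end

section
/- If a real-analytic function f on a connected open subset U ⊆ ℝ^b is not identically zero, then its zero set f⁻¹({0}) has Lebesgue measure zero in ℝ^b. -/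
/-!
STATEMENT 8: a real-analytic function on a connected open subset `U ⊆ ℝ^b`
which is not identically zero has a zero set of Lebesgue measure zero.
-/

open MeasureTheory

open Set Filter Topology FormalMultilinearSeries

lemma aux_countable_zero_set_1d {g : ℝ → ℝ} {V : Set ℝ} (hVc : IsPreconnected V)
    (hg : AnalyticOnNhd ℝ g V) {t₁ : ℝ} (ht₁ : t₁ ∈ V) (h1 : g t₁ ≠ 0) :
    {t ∈ V | g t = 0}.Countable := by
  set W := {t ∈ V | g t = 0} with hW
  have key : ∀ t ∈ W, ({t} : Set ℝ) ∈ 𝓝[W] t := by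
    intro t ht
    rcases (hg t ht.1).eventually_eq_zero_or_eventually_ne_zero with hev | hne
    · exact absurd (hg.eqOn_zero_of_preconnected_of_eventuallyEq_zero hVc ht.1 hev ht₁) h1
    · rw [eventually_nhdsWithin_iff, eventually_nhds_iff] at hne
      obtain ⟨s, hs, hso, hts⟩ := hne
      rw [mem_nhdsWithin]
      refine ⟨s, hso, hts, ?_⟩
      rintro z ⟨hz1, hz2⟩
      by_contra hzt
      exact hs z hz1 (by simpa using hzt) hz2.2
  obtain ⟨T, hTW, hTc, hcover⟩ := TopologicalSpace.countable_cover_nhdsWithin key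
  refine hTc.mono ?_
  simpa using hcover

lemma aux_exists_unit_direction {E : Type*} [NormedAddCommGroup E] [NormedSpace ℝ E]
    {f : E → ℝ} {x : E} (hfa : AnalyticAt ℝ f x) (hx0 : f x = 0)
    (hnev : ¬ f =ᶠ[𝓝 x] (0 : E → ℝ)) :
    ∃ u : E, ‖u‖ = 1 ∧ ∀ᶠ s in 𝓝[≠] (0 : ℝ), f (x + s • u) ≠ 0 := by
  obtain ⟨p, r, hpr⟩ := hfa
  -- Claim A: some unit direction has a nonzero diagonal coefficient
  have hA : ∃ u : E, ‖u‖ = 1 ∧ ∃ n, p n (fun _ => u) ≠ 0 := by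
    by_contra h
    push_neg at h
    have hall : ∀ (w : E) (n : ℕ), p n (fun _ => w) = 0 := by
      intro w n
      match n with
      | 0 => rw [hpr.coeff_zero]; exact hx0
      | (m+1) =>
        rcases eq_or_ne w 0 with hw | hw
        · exact (p (m+1)).map_coord_zero 0 (by simp [hw])
        · have hu : ‖(‖w‖⁻¹ • w)‖ = 1 := norm_smul_inv_norm hw
          have : (fun _ : Fin (m+1) => w) = fun _ => ‖w‖ • (‖w‖⁻¹ • w) := by
            funext i; rw [smul_inv_smul₀ (norm_ne_zero_iff.2 hw)]
          rw [this, (p (m+1)).map_smul_univ, h _ hu, smul_zero]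
    apply hnev
    filter_upwards [Metric.eball_mem_nhds x hpr.r_pos] with z hz
    have hz' : z - x ∈ Metric.eball (0 : E) r := by
      simpa [Metric.mem_eball, edist_eq_enorm_sub, edist_zero_right] using hz
    have := hpr.hasSum hz'
    simp only [hall] at this
    have h0 : f (x + (z - x)) = 0 := this.unique hasSum_zero
    simpa using h0
  obtain ⟨u, hu, n₀, hc⟩ := hA
  refine ⟨u, hu, ?_⟩
  set c : ℕ → ℝ := fun n => p n (fun _ => u) with hcdef
  set q : FormalMultilinearSeries ℝ ℝ ℝ := ofScalars ℝ c with hq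
  set g : ℝ → ℝ := fun s => f (x + s • u) with hg
  have hqat : HasFPowerSeriesAt g q 0 := by
    obtain ⟨r', hr'pos, hr'lt⟩ := ENNReal.lt_iff_exists_nnreal_btwn.1 hpr.r_pos
    have hr'rad : (r' : ENNReal) < p.radius := lt_of_lt_of_le hr'lt hpr.r_le
    obtain ⟨C, hCpos, hC⟩ := p.norm_mul_pow_le_of_lt_radius hr'rad
    have hrad : (r' : ENNReal) ≤ q.radius := by
      apply q.le_radius_of_bound C
      intro n
      have h1 : ‖q n‖ = ‖c n‖ := ofScalars_norm ℝ c n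
      have h2 : ‖c n‖ ≤ ‖p n‖ := by
        calc ‖c n‖ = ‖p n (fun _ => u)‖ := rfl
          _ ≤ ‖p n‖ * ∏ _i : Fin n, ‖u‖ := (p n).le_opNorm _
          _ = ‖p n‖ := by simp [hu]
      calc ‖q n‖ * (r' : ℝ) ^ n ≤ ‖p n‖ * (r' : ℝ) ^ n := by
            rw [h1]; gcongr
        _ ≤ C := hC n
    refine ⟨r', ?_⟩
    refine ⟨hrad, by exact_mod_cast hr'pos, ?_⟩
    intro y hy
    have hy' : ‖y‖₊ < r' := by rw [Metric.mem_eball, edist_zero_right, enorm_eq_nnnorm] at hy; exact_mod_cast hy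
    have hyu : y • u ∈ Metric.eball (0 : E) r := by
      rw [Metric.mem_eball, edist_zero_right, enorm_eq_nnnorm]
      have h3 : ‖y • u‖₊ = ‖y‖₊ := by
        rw [nnnorm_smul]
        have h4 : ‖u‖₊ = 1 := by ext; simpa using hu
        simp [h4]
      rw [h3]
      exact lt_of_lt_of_le (by exact_mod_cast hy') hr'lt.le
    have := hpr.hasSum hyu
    have hterm : ∀ n, p n (fun _ => y • u) = q n (fun _ => y) := by
      intro n
      rw [(p n).map_smul_univ, ofScalars_apply_eq]
      simp [c, smul_eq_mul, mul_comm]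
    rw [funext hterm] at this
    simpa [g] using this
  have hq0 : q ≠ 0 := by
    intro h
    apply hc
    have : q n₀ = 0 := by rw [h]; rfl
    rwa [hq, ofScalars_eq_zero] at this
  have := hqat.locally_ne_zero hq0
  simpa [g] using this

lemma aux_zero_case
    (U : Set (EuclideanSpace ℝ (Fin 0))) (f : EuclideanSpace ℝ (Fin 0) → ℝ)
    (hne : ∃ x ∈ U, f x ≠ 0) :
    MeasureTheory.volume {x ∈ U | f x = 0} = 0 := by
  obtain ⟨x₀, hx₀U, hx₀⟩ := hne
  have hempty : {x ∈ U | f x = 0} = ∅ := by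
    ext x
    simp only [mem_setOf_eq, mem_empty_iff_false, iff_false, not_and]
    intro hxU hx
    have hxx : x = x₀ := PiLp.ext fun i => i.elim0
    exact hx₀ (hxx ▸ hx)
  rw [hempty]; exact measure_empty

lemma aux_succ_case (n : ℕ)
    (U : Set (EuclideanSpace ℝ (Fin (n+1)))) (hUopen : IsOpen U) (hUconn : IsConnected U)
    (f : EuclideanSpace ℝ (Fin (n+1)) → ℝ)
    (hf : AnalyticOnNhd ℝ f U)
    (hne : ∃ x ∈ U, f x ≠ 0) :
    volume {x ∈ U | f x = 0} = 0 := by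
  classical
  obtain ⟨x₀, hx₀U, hx₀⟩ := hne
  have hnev : ∀ z ∈ U, ¬ f =ᶠ[𝓝 z] (0 : EuclideanSpace ℝ (Fin (n+1)) → ℝ) := by
    intro z hz hev
    exact hx₀ (hf.eqOn_zero_of_preconnected_of_eventuallyEq_zero hUconn.isPreconnected hz hev hx₀U)
  set Z := {x ∈ U | f x = 0} with hZdef
  have hO : IsOpen {z ∈ U | f z ≠ 0} := by
    rw [isOpen_iff_mem_nhds]
    rintro z ⟨hzU, hz0⟩
    have hc : ContinuousAt f z := (hf z hzU).continuousAt
    filter_upwards [hc.eventually_ne hz0, hUopen.mem_nhds hzU] with w h1 h2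
    exact ⟨h2, h1⟩
  have hZmeas : MeasurableSet Z := by
    have : Z = U \ {z ∈ U | f z ≠ 0} := by
      ext z; simp only [hZdef, mem_setOf_eq, mem_diff]; tauto
    rw [this]; exact hUopen.measurableSet.diff hO.measurableSet
  apply measure_null_of_locally_null
  rintro x ⟨hxU, hfx⟩
  obtain ⟨u, hu, hufreq⟩ := aux_exists_unit_direction (hf x hxU) hfx (hnev x hxU)
  set L := WithLp.linearEquiv 2 ℝ (Fin (n+1) → ℝ) with hLdef
  set eV : EuclideanSpace ℝ (Fin (n+1)) := EuclideanSpace.single (0 : Fin (n+1)) (1:ℝ) with heV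
  set Φ := Submodule.reflection (Submodule.span ℝ {eV - u})ᗮ with hΦdef
  have hΦe : Φ eV = u := Submodule.reflection_sub (by rw [heV, EuclideanSpace.norm_single]; simp [hu.symm])
  set m : (Fin n → ℝ) × ℝ → EuclideanSpace ℝ (Fin (n+1)) :=
    fun yt => Φ (L.symm (Fin.cons yt.2 yt.1)) with hmdef
  have hπ : ∀ (t : ℝ) (y : Fin n → ℝ),
      (MeasurableEquiv.piFinSuccAbove (fun _ : Fin (n+1) => ℝ) 0).symm (t, y) = Fin.cons t y := by
    intro t y
    simp only [MeasurableEquiv.piFinSuccAbove_symm_apply, Fin.insertNthEquiv_zero]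
    rfl
  -- measure preservation
  have hmp : MeasurePreserving m
      ((volume : Measure (Fin n → ℝ)).prod (volume : Measure ℝ)) volume := by
    have h2 := (MeasureTheory.volume_preserving_piFinSuccAbove (fun _ : Fin (n+1) => ℝ) 0).symm
    have h3 := (EuclideanSpace.volume_preserving_symm_measurableEquiv_toLp (Fin (n+1))).symm
    have h4 := Φ.measurePreserving
    have h5 := ((h4.comp h3).comp h2).comp MeasureTheory.Measure.measurePreserving_swap
    have hfun : ((⇑Φ ∘ ⇑(MeasurableEquiv.toLp 2 (Fin (n+1) → ℝ))) ∘
        ⇑(MeasurableEquiv.piFinSuccAbove (fun _ : Fin (n+1) => ℝ) 0).symm) ∘ Prod.swap = m := by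
      funext yt
      show Φ ((MeasurableEquiv.toLp 2 (Fin (n+1) → ℝ))
        ((MeasurableEquiv.piFinSuccAbove (fun _ : Fin (n+1) => ℝ) 0).symm (yt.2, yt.1))) = _
      rw [hπ]
      rfl
    rw [← hfun]
    exact h5
  have hmcont : Continuous m := by
    refine Φ.continuous.comp ?_
    refine (PiLp.continuous_toLp 2 (fun _ : Fin (n+1) => ℝ)).comp ?_
    apply continuous_pi
    intro j
    induction j using Fin.cases with
    | zero => simpa using continuous_snd
    | succ j' => simpa using (show Continuous fun p : (Fin n → ℝ) × ℝ => p.1 j' from (continuous_apply j').comp continuous_fst)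
  -- inverse map
  set mInv : EuclideanSpace ℝ (Fin (n+1)) → (Fin n → ℝ) × ℝ :=
    fun z => (Fin.tail (L (Φ.symm z)), L (Φ.symm z) 0) with hmInvdef
  have hmInvcont : Continuous mInv := by
    have hbase : Continuous (fun z : EuclideanSpace ℝ (Fin (n+1)) => L (Φ.symm z)) :=
      (PiLp.continuous_ofLp 2 (fun _ : Fin (n+1) => ℝ)).comp Φ.symm.continuous
    refine Continuous.prodMk ?_ ?_
    · exact (continuous_pi fun j => continuous_apply _).comp hbase
    · exact (continuous_apply (0 : Fin (n+1))).comp hbase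
  have hleft : ∀ yt, mInv (m yt) = yt := by
    rintro ⟨y, t⟩
    show (Fin.tail (L (Φ.symm (Φ (L.symm (Fin.cons t y))))),
      L (Φ.symm (Φ (L.symm (Fin.cons t y)))) 0) = (y, t)
    rw [Φ.symm_apply_apply, L.apply_symm_apply]
    simp [Fin.tail_cons]
  -- decomposition
  have hmdecomp : ∀ y t, m (y, t) = m (y, 0) + t • u := by
    intro y t
    have h5 : (Fin.cons t y : Fin (n+1) → ℝ)
        = Fin.cons (0:ℝ) y + t • (Pi.single 0 1 : Fin (n+1) → ℝ) := by
      funext j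
      induction j using Fin.cases with
      | zero => simp
      | succ j' => simp [Fin.succ_ne_zero]
    show Φ (L.symm (Fin.cons t y)) = Φ (L.symm (Fin.cons 0 y)) + t • u
    rw [h5, map_add, map_add, _root_.map_smul, _root_.map_smul]
    congr 1
    rw [show L.symm (Pi.single 0 1 : Fin (n+1) → ℝ) = eV from rfl, hΦe]
  -- base point coordinates
  set w : Fin (n+1) → ℝ := L (Φ.symm x) with hwdef
  set a : ℝ := w 0 with hadef
  set cc : Fin n → ℝ := Fin.tail w with hccdef
  have hmx : m (cc, a) = x := by
    show Φ (L.symm (Fin.cons (w 0) (Fin.tail w))) = x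
    rw [Fin.cons_self_tail, L.symm_apply_apply, Φ.apply_symm_apply]
  -- choose r
  have hmem : m ⁻¹' U ∈ 𝓝 (cc, a) :=
    hmcont.continuousAt.preimage_mem_nhds (hUopen.mem_nhds (by rw [hmx]; exact hxU))
  obtain ⟨r, hrpos, hrU⟩ := Metric.mem_nhds_iff.1 hmem
  have hballU : ∀ y t, y ∈ Metric.ball cc r → t ∈ Metric.ball a r → m (y, t) ∈ U := by
    intro y t hy ht
    apply hrU
    rw [← ball_prod_same]
    exact ⟨hy, ht⟩
  -- choose s₁
  have h7 : ∀ᶠ s in 𝓝[≠] (0:ℝ), s ∈ Metric.ball (0:ℝ) r :=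
    eventually_nhdsWithin_of_eventually_nhds
      (eventually_of_mem (Metric.ball_mem_nhds (0:ℝ) hrpos) fun _ h => h)
  obtain ⟨s₁, hs₁f, hs₁r⟩ := (hufreq.and h7).exists
  set t₁ : ℝ := a + s₁ with ht₁def
  have ht₁ball : t₁ ∈ Metric.ball a r := by
    rw [Metric.mem_ball, ht₁def, Real.dist_eq]
    simpa [Real.dist_eq] using hs₁r
  have hxs : ∀ s : ℝ, m (cc, a + s) = x + s • u := by
    intro s
    rw [hmdecomp cc (a + s), add_smul, ← add_assoc, ← hmdecomp cc a, hmx]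
  have hfmt₁ : f (m (cc, t₁)) ≠ 0 := by rw [ht₁def, hxs]; exact hs₁f
  -- choose ρ
  have hcy : ContinuousAt (fun y => f (m (y, t₁))) cc := by
    have hin : m (cc, t₁) ∈ U := hballU cc t₁ (Metric.mem_ball_self hrpos) ht₁ball
    have hc1 : Continuous (fun y : Fin n → ℝ => m (y, t₁)) :=
      hmcont.comp (continuous_id.prodMk continuous_const)
    have hc2 : ContinuousAt (f ∘ fun y : Fin n → ℝ => m (y, t₁)) cc :=
      ContinuousAt.comp (g := f) (f := fun y : Fin n → ℝ => m (y, t₁)) (x := cc)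
        ((hf _ hin).continuousAt) hc1.continuousAt
    exact hc2
  obtain ⟨ρ₀, hρ₀pos, hρ₀⟩ := Metric.eventually_nhds_iff.1 (hcy.eventually_ne hfmt₁)
  set ρ : ℝ := min ρ₀ r with hρdef
  have hρpos : 0 < ρ := lt_min hρ₀pos hrpos
  have hρler : ρ ≤ r := min_le_right _ _
  have hρprop : ∀ y ∈ Metric.ball cc ρ, f (m (y, t₁)) ≠ 0 := by
    intro y hy
    exact hρ₀ (lt_of_lt_of_le (Metric.mem_ball.1 hy) (min_le_left _ _))
  -- the neighborhood
  set N : Set (EuclideanSpace ℝ (Fin (n+1))) :=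
    mInv ⁻¹' (Metric.ball cc ρ ×ˢ Metric.ball a r) with hNdef
  have hNopen : IsOpen N := (Metric.isOpen_ball.prod Metric.isOpen_ball).preimage hmInvcont
  have hxN : x ∈ N := by
    have hmi : mInv x = (cc, a) := rfl
    show mInv x ∈ Metric.ball cc ρ ×ˢ Metric.ball a r
    rw [hmi]
    exact ⟨Metric.mem_ball_self hρpos, Metric.mem_ball_self hrpos⟩
  refine ⟨Z ∩ N, inter_mem self_mem_nhdsWithin
    (mem_nhdsWithin_of_mem_nhds (hNopen.mem_nhds hxN)), ?_⟩
  have hZNmeas : MeasurableSet (Z ∩ N) := hZmeas.inter hNopen.measurableSet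
  rw [← hmp.measure_preimage hZNmeas.nullMeasurableSet]
  set S := m ⁻¹' (Z ∩ N) with hSdef
  have hSmeas : MeasurableSet S := hZNmeas.preimage hmp.measurable
  rw [MeasureTheory.Measure.measure_prod_null hSmeas]
  refine Filter.Eventually.of_forall ?_
  intro y
  have hslice : Prod.mk y ⁻¹' S = {t | m (y, t) ∈ Z ∩ N} := rfl
  by_cases hy : y ∈ Metric.ball cc ρ
  · have hsub : Prod.mk y ⁻¹' S
        ⊆ {t ∈ Metric.ball a r | (fun t => f (m (y, t))) t = 0} := by
      rintro t ⟨⟨hmU, hmf⟩, hmN⟩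
      have hN' : (y, t) ∈ Metric.ball cc ρ ×ˢ Metric.ball a r := by
        have := hmN
        rwa [hNdef, mem_preimage, hleft (y, t)] at this
      exact ⟨hN'.2, hmf⟩
    have hcnt : {t ∈ Metric.ball a r | (fun t => f (m (y, t))) t = 0}.Countable := by
      apply aux_countable_zero_set_1d (convex_ball a r).isPreconnected
      · intro t ht
        have hin : m (y, t) ∈ U := hballU y t (Metric.ball_subset_ball hρler hy) ht
        have haff : AnalyticAt ℝ (fun s : ℝ => m (y, 0) + s • u) t := by
          apply analyticAt_const.add
          have := (ContinuousLinearMap.smulRight (ContinuousLinearMap.id ℝ ℝ) u).analyticAt t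
          convert this using 1; funext s; simp [ContinuousLinearMap.smulRight_apply]
        have hcomp : AnalyticAt ℝ (f ∘ fun s : ℝ => m (y, 0) + s • u) t := by
          apply AnalyticAt.comp _ haff
          rw [← hmdecomp y t]
          exact hf _ hin
        have : (fun t => f (m (y, t))) = f ∘ fun s : ℝ => m (y, 0) + s • u := by
          funext s; simp only [Function.comp_apply, ← hmdecomp y s]
        rw [this]
        exact hcomp
      · exact ht₁ball
      · exact hρprop y hy
    simp only [Pi.zero_apply]
    exact measure_mono_null hsub (hcnt.measure_zero _)
  · have : Prod.mk y ⁻¹' S = ∅ := by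
      ext t
      simp only [hslice, mem_setOf_eq, mem_empty_iff_false, iff_false]
      rintro ⟨-, hmN⟩
      have hN' : (y, t) ∈ Metric.ball cc ρ ×ˢ Metric.ball a r := by
        rwa [hNdef, mem_preimage, hleft (y, t)] at hmN
      exact hy hN'.1
    simp [this]

theorem analytic_zero_set_measure_zero (b : ℕ)
    (U : Set (EuclideanSpace ℝ (Fin b))) (hUopen : IsOpen U) (hUconn : IsConnected U)
    (f : EuclideanSpace ℝ (Fin b) → ℝ)
    (hf : AnalyticOnNhd ℝ f U)
    (hne : ∃ x ∈ U, f x ≠ 0) :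
    volume {x ∈ U | f x = 0} = 0 :=
  match b, U, f, hUopen, hUconn, hf, hne with
  | 0, U, f, _, _, _, hne => aux_zero_case U f hne
  | (n+1), U, f, hUopen, hUconn, hf, hne =>
      aux_succ_case n U hUopen hUconn f hf hne
end

section
/- Let |ψ⟩ = |n_1,…,n_m⟩ be a Fock basis state with exactly u unoccupied modes (u := #{i : n_i = 0}). Then the real rank of the list of m² vectors {e_{kl}|ψ⟩, E_{kl}|ψ⟩ (1 ≤ k < l ≤ m), N_k|ψ⟩ (1 ≤ k ≤ m)} equals m(m−1) − u(u−1) + [u ≠ m], where [u ≠ m] is 1 if some mode is occupied and 0 otherwise. -/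
/-!
STATEMENT 15: for a Fock basis state `|ψ⟩ = |n₁,…,n_m⟩` with exactly `u`
unoccupied modes, the real rank of the `m²` vectors
`{e_{kl}|ψ⟩, E_{kl}|ψ⟩ (k<l), N_k|ψ⟩}` equals `m(m−1) − u(u−1) + [u ≠ m]`.
(This is the orbit dimension of `|n⟩` under passive linear optics.)
-/

noncomputable section

abbrev FockFin (m : ℕ) := (Fin m → ℕ) →₀ ℂ

noncomputable def fockState {m : ℕ} (n : Fin m → ℕ) : FockFin m :=
  Finsupp.single n 1

noncomputable def ann {m : ℕ} (k : Fin m) : FockFin m →ₗ[ℂ] FockFin m :=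
  Finsupp.lift (FockFin m) ℂ (Fin m → ℕ) fun n =>
    (Real.sqrt (n k) : ℂ) • Finsupp.single (Function.update n k (n k - 1)) 1

noncomputable def cre {m : ℕ} (k : Fin m) : FockFin m →ₗ[ℂ] FockFin m :=
  Finsupp.lift (FockFin m) ℂ (Fin m → ℕ) fun n =>
    (Real.sqrt (n k + 1) : ℂ) • Finsupp.single (Function.update n k (n k + 1)) 1

noncomputable def eGen {m : ℕ} (k l : Fin m) : FockFin m →ₗ[ℂ] FockFin m :=
  ((1 : ℂ)/2) • (cre k ∘ₗ ann l + cre l ∘ₗ ann k)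

noncomputable def EGen {m : ℕ} (k l : Fin m) : FockFin m →ₗ[ℂ] FockFin m :=
  (Complex.I/2) • (cre k ∘ₗ ann l - cre l ∘ₗ ann k)

noncomputable def NGen {m : ℕ} (k : Fin m) : FockFin m →ₗ[ℂ] FockFin m :=
  cre k ∘ₗ ann k

/-- The list of `m² = 2·C(m,2) + m` vectors
`e_{kl}|ψ⟩, E_{kl}|ψ⟩ (k < l), N_k|ψ⟩ (1 ≤ k ≤ m)`. -/
noncomputable def orbitVectors {m : ℕ} (n : Fin m → ℕ) :
    ({p : Fin m × Fin m // p.1 < p.2} ⊕ {p : Fin m × Fin m // p.1 < p.2} ⊕ Fin m) →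
      FockFin m :=
  Sum.elim (fun p => eGen p.1.1 p.1.2 (fockState n))
    (Sum.elim (fun p => EGen p.1.1 p.1.2 (fockState n))
      (fun k => NGen k (fockState n)))

namespace Scratch
variable {m : ℕ}

lemma ann_fock (k : Fin m) (n : Fin m → ℕ) :
    ann k (fockState n) =
      (Real.sqrt (n k) : ℂ) • Finsupp.single (Function.update n k (n k - 1)) 1 := by
  rw [ann, fockState, Finsupp.lift_apply, Finsupp.sum_single_index (by rw [zero_smul]), one_smul]

lemma cre_single (k : Fin m) (g : Fin m → ℕ) :
    cre k (Finsupp.single g (1:ℂ)) =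
      (Real.sqrt (g k + 1) : ℂ) • Finsupp.single (Function.update g k (g k + 1)) 1 := by
  rw [cre, Finsupp.lift_apply, Finsupp.sum_single_index (by rw [zero_smul]), one_smul]

def Amap (n : Fin m → ℕ) (k l : Fin m) : Fin m → ℕ :=
  Function.update (Function.update n l (n l - 1)) k (n k + 1)

def cc (n : Fin m → ℕ) (k l : Fin m) : ℝ := Real.sqrt (n l) * Real.sqrt (n k + 1)

lemma creann_fock (n : Fin m → ℕ) {k l : Fin m} (hkl : k ≠ l) :
    (cre k ∘ₗ ann l) (fockState n) = ((cc n k l : ℝ) : ℂ) • Finsupp.single (Amap n k l) 1 := by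
  have h1 : (Function.update n l (n l - 1)) k = n k := Function.update_of_ne hkl _ _
  rw [LinearMap.comp_apply, ann_fock, LinearMap.map_smul, cre_single, h1, smul_smul, Amap, cc]
  norm_cast

lemma eGen_fock (n : Fin m → ℕ) {k l : Fin m} (hkl : k ≠ l) :
    eGen k l (fockState n) =
      (((cc n k l : ℝ) : ℂ)/2) • Finsupp.single (Amap n k l) 1 +
      (((cc n l k : ℝ) : ℂ)/2) • Finsupp.single (Amap n l k) 1 := by
  rw [eGen, LinearMap.smul_apply, LinearMap.add_apply, creann_fock n hkl, creann_fock n hkl.symm]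
  rw [smul_add, smul_smul, smul_smul]
  ring_nf

lemma EGen_fock (n : Fin m → ℕ) {k l : Fin m} (hkl : k ≠ l) :
    EGen k l (fockState n) =
      (Complex.I * ((cc n k l : ℝ) : ℂ)/2) • Finsupp.single (Amap n k l) 1 -
      (Complex.I * ((cc n l k : ℝ) : ℂ)/2) • Finsupp.single (Amap n l k) 1 := by
  rw [EGen, LinearMap.smul_apply, LinearMap.sub_apply, creann_fock n hkl, creann_fock n hkl.symm]
  rw [smul_sub, smul_smul, smul_smul]
  ring_nf

lemma NGen_fock (n : Fin m → ℕ) (k : Fin m) :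
    NGen k (fockState n) = ((n k : ℕ) : ℂ) • fockState n := by
  rw [NGen, LinearMap.comp_apply, ann_fock, LinearMap.map_smul, cre_single, smul_smul]
  rcases Nat.eq_zero_or_pos (n k) with h | h
  · simp [h]
  · have h1 : (Function.update n k (n k - 1)) k = n k - 1 := Function.update_self _ _ _
    have h2 : n k - 1 + 1 = n k := Nat.succ_pred_eq_of_pos h
    rw [h1, h2, Function.update_idem, Function.update_eq_self, fockState]
    congr 1
    have h4 : ((n k - 1 : ℕ) : ℝ) + 1 = (n k : ℝ) := by
      rw [Nat.cast_sub h]; push_cast; ring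
    rw [h4, ← Complex.ofReal_mul, Real.mul_self_sqrt (by positivity)]
    norm_cast


lemma Amap_apply (n : Fin m → ℕ) {k l : Fin m} (hkl : k ≠ l) (i : Fin m) :
    Amap n k l i = if i = k then n k + 1 else if i = l then n l - 1 else n i := by
  simp [Amap, Function.update_apply]

lemma Amap_ne (n : Fin m → ℕ) {k l : Fin m} (hkl : k ≠ l) (hl : n l ≠ 0) :
    Amap n k l ≠ n := by
  intro h
  have := congrFun h k
  rw [Amap_apply n hkl] at this
  simp at this

lemma Amap_inj (n : Fin m → ℕ) {k l k' l' : Fin m} (hkl : k ≠ l) (hkl' : k' ≠ l')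
    (hl : n l ≠ 0) (hl' : n l' ≠ 0) (h : Amap n k l = Amap n k' l') : k = k' ∧ l = l' := by
  have hkk : k = k' := by
    by_contra hne
    have e1 : Amap n k l k = n k + 1 := by rw [Amap_apply n hkl, if_pos rfl]
    have hk := congrFun h k
    rw [e1, Amap_apply n hkl', if_neg hne] at hk
    by_cases hk2 : k = l'
    · rw [if_pos hk2] at hk; subst hk2; omega
    · rw [if_neg hk2] at hk; omega
  subst hkk
  refine ⟨rfl, ?_⟩
  by_contra hne
  have e1 : Amap n k l l = n l - 1 := by
    rw [Amap_apply n hkl, if_neg (Ne.symm hkl), if_pos rfl]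
  have hl2 := congrFun h l
  rw [e1, Amap_apply n hkl', if_neg (Ne.symm hkl), if_neg hne] at hl2
  omega

lemma cc_eq_zero (n : Fin m → ℕ) (k : Fin m) {l : Fin m} (hl : n l = 0) : cc n k l = 0 := by
  simp [cc, hl]

lemma cc_ne_zero (n : Fin m → ℕ) (k : Fin m) {l : Fin m} (hl : n l ≠ 0) : cc n k l ≠ 0 := by
  have h0 : (0:ℝ) < (n l : ℝ) := by exact_mod_cast Nat.pos_of_ne_zero hl
  have h1 : (0:ℝ) < Real.sqrt (n l) := Real.sqrt_pos.2 h0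
  have h2 : (0:ℝ) < Real.sqrt ((n k : ℝ) + 1) := Real.sqrt_pos.2 (by positivity)
  exact ne_of_gt (mul_pos h1 h2)

/-- key indicator computation -/
lemma term_eval (n : Fin m → ℕ) {a b k l : Fin m} (hab : a ≠ b) (hb : n b ≠ 0) (hkl : k ≠ l) :
    ((cc n k l : ℝ):ℂ) * (Finsupp.single (Amap n k l) (1:ℂ)) (Amap n a b) =
      if (k, l) = (a, b) then ((cc n a b : ℝ):ℂ) else 0 := by
  rw [Finsupp.single_apply]
  by_cases hl : n l = 0
  · have hne : (k, l) ≠ (a, b) := by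
      intro h; rw [Prod.mk.injEq] at h; exact hb (h.2 ▸ hl)
    rw [cc_eq_zero n k hl, if_neg hne]
    simp
  · by_cases heq : Amap n k l = Amap n a b
    · obtain ⟨rfl, rfl⟩ := Amap_inj n hkl hab hl hb heq
      simp
    · have hne : (k, l) ≠ (a, b) := by
        intro h; rw [Prod.mk.injEq] at h; exact heq (by rw [h.1, h.2])
      rw [if_neg heq, if_neg hne, mul_zero]

lemma term_eval_self (n : Fin m → ℕ) {k l : Fin m} (hkl : k ≠ l) :
    ((cc n k l : ℝ):ℂ) * (Finsupp.single (Amap n k l) (1:ℂ)) n = 0 := by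
  rw [Finsupp.single_apply]
  by_cases hl : n l = 0
  · rw [cc_eq_zero n k hl]; simp
  · rw [if_neg (Amap_ne n hkl hl), mul_zero]

lemma eGen_eval (n : Fin m → ℕ) {a b k l : Fin m} (hab : a ≠ b) (hb : n b ≠ 0) (hkl : k ≠ l) :
    (eGen k l (fockState n)) (Amap n a b) =
      ((if (k, l) = (a, b) then ((cc n a b : ℝ):ℂ) else 0)
        + (if (k, l) = (b, a) then ((cc n a b : ℝ):ℂ) else 0)) / 2 := by
  rw [eGen_fock n hkl, Finsupp.add_apply, Finsupp.smul_apply, Finsupp.smul_apply,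
    smul_eq_mul, smul_eq_mul]
  have t1 := term_eval n hab hb hkl
  have t2 := term_eval n hab hb hkl.symm
  have hswap : ((l, k) = (a, b)) ↔ ((k, l) = (b, a)) := by
    simp [Prod.ext_iff, and_comm]
  rw [if_congr hswap rfl rfl] at t2
  linear_combination t1 / 2 + t2 / 2

lemma EGen_eval (n : Fin m → ℕ) {a b k l : Fin m} (hab : a ≠ b) (hb : n b ≠ 0) (hkl : k ≠ l) :
    (EGen k l (fockState n)) (Amap n a b) =
      Complex.I * ((if (k, l) = (a, b) then ((cc n a b : ℝ):ℂ) else 0)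
        - (if (k, l) = (b, a) then ((cc n a b : ℝ):ℂ) else 0)) / 2 := by
  rw [EGen_fock n hkl, Finsupp.sub_apply, Finsupp.smul_apply, Finsupp.smul_apply,
    smul_eq_mul, smul_eq_mul]
  have t1 := term_eval n hab hb hkl
  have t2 := term_eval n hab hb hkl.symm
  have hswap : ((l, k) = (a, b)) ↔ ((k, l) = (b, a)) := by
    simp [Prod.ext_iff, and_comm]
  rw [if_congr hswap rfl rfl] at t2
  linear_combination (Complex.I/2) * t1 - (Complex.I/2) * t2

lemma eGen_eval_self (n : Fin m → ℕ) {k l : Fin m} (hkl : k ≠ l) :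
    (eGen k l (fockState n)) n = 0 := by
  rw [eGen_fock n hkl, Finsupp.add_apply, Finsupp.smul_apply, Finsupp.smul_apply,
    smul_eq_mul, smul_eq_mul]
  have t1 := term_eval_self n hkl
  have t2 := term_eval_self n hkl.symm
  linear_combination t1 / 2 + t2 / 2

lemma EGen_eval_self (n : Fin m → ℕ) {k l : Fin m} (hkl : k ≠ l) :
    (EGen k l (fockState n)) n = 0 := by
  rw [EGen_fock n hkl, Finsupp.sub_apply, Finsupp.smul_apply, Finsupp.smul_apply,
    smul_eq_mul, smul_eq_mul]
  have t1 := term_eval_self n hkl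
  have t2 := term_eval_self n hkl.symm
  linear_combination (Complex.I/2) * t1 - (Complex.I/2) * t2


def occP {m : ℕ} (n : Fin m → ℕ) (p : Fin m × Fin m) : Prop := n p.1 ≠ 0 ∨ n p.2 ≠ 0

instance {m : ℕ} (n : Fin m → ℕ) : DecidablePred (occP n) := fun _ =>
  inferInstanceAs (Decidable (_ ∨ _))

abbrev SIdx {m : ℕ} (n : Fin m → ℕ) := {q : {p : Fin m × Fin m // p.1 < p.2} // occP n q.1}

abbrev Idx {m : ℕ} (n : Fin m → ℕ) := SIdx n ⊕ SIdx n ⊕ Unit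

def wFam {m : ℕ} (n : Fin m → ℕ) : Idx n → FockFin m :=
  Sum.elim (fun q => eGen q.1.1.1 q.1.1.2 (fockState n))
    (Sum.elim (fun q => EGen q.1.1.1 q.1.1.2 (fockState n)) (fun _ => fockState n))

def evR {m : ℕ} (t : Fin m → ℕ) : FockFin m →ₗ[ℝ] ℂ where
  toFun x := x t
  map_add' x y := by simp
  map_smul' r x := by simp

lemma ne_ordered {q q' : {p : Fin m × Fin m // p.1 < p.2}} (h : q' ≠ q) :
    (q'.1.1, q'.1.2) ≠ (q.1.1, q.1.2) := by
  intro he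
  injection he with h1 h2
  exact h (Subtype.ext (Prod.ext h1 h2))

lemma ne_swapped {q q' : {p : Fin m × Fin m // p.1 < p.2}} :
    (q'.1.1, q'.1.2) ≠ (q.1.2, q.1.1) := by
  intro he
  injection he with h1 h2
  have h3 := q'.2
  rw [h1, h2] at h3
  exact lt_asymm q.2 h3

lemma sum_single_support {α : Type*} [Fintype α] (f : α → ℂ) (q : α)
    (h : ∀ q', q' ≠ q → f q' = 0) : ∑ q', f q' = f q :=
  Finset.sum_eq_single_of_mem q (Finset.mem_univ q) (fun q' _ h' => h q' h')

lemma wFam_indep (n : Fin m → ℕ) : LinearIndependent ℝ (wFam n) := by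
  rw [Fintype.linearIndependent_iff]
  intro g hg
  have key : ∀ t : Fin m → ℕ, ∑ i, g i • (wFam n i) t = 0 := by
    intro t
    have h := congrArg (evR t) hg
    rw [map_sum, map_zero] at h
    simp only [map_smul] at h
    exact h
  -- pair indices
  have main : ∀ q : SIdx n, g (Sum.inl q) = 0 ∧ g (Sum.inr (Sum.inl q)) = 0 := by
    intro q
    have hkl : q.1.1.1 < q.1.1.2 := q.1.2
    have hkl' : q.1.1.1 ≠ q.1.1.2 := ne_of_lt hkl
    by_cases hl : n q.1.1.2 ≠ 0
    · -- target Amap n k l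
      have ht := key (Amap n q.1.1.1 q.1.1.2)
      rw [Fintype.sum_sum_type, Fintype.sum_sum_type] at ht
      simp only [wFam, Sum.elim_inl, Sum.elim_inr, Finset.univ_unique, Finset.sum_singleton] at ht
      rw [sum_single_support _ q (by
        intro q' hq'
        have h1 : q'.1.1.1 ≠ q'.1.1.2 := ne_of_lt q'.1.2
        rw [eGen_eval n hkl' hl h1, if_neg (ne_ordered (fun h => hq' (Subtype.ext h))),
          if_neg ne_swapped]
        simp)] at ht
      rw [sum_single_support _ q (by
        intro q' hq'
        have h1 : q'.1.1.1 ≠ q'.1.1.2 := ne_of_lt q'.1.2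
        rw [EGen_eval n hkl' hl h1, if_neg (ne_ordered (fun h => hq' (Subtype.ext h))),
          if_neg ne_swapped]
        simp)] at ht
      have hsw : ((q.1.1.1, q.1.1.2) : Fin m × Fin m) ≠ (q.1.1.2, q.1.1.1) := by
        intro h; injection h with h1 h2; exact hkl' h1
      rw [eGen_eval n hkl' hl hkl', EGen_eval n hkl' hl hkl', if_pos rfl, if_neg hsw] at ht
      have hz : (fockState n) (Amap n q.1.1.1 q.1.1.2) = 0 := by
        rw [fockState, Finsupp.single_apply, if_neg (Ne.symm (Amap_ne n hkl' hl))]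
      rw [hz, smul_zero, add_zero] at ht
      rw [Complex.real_smul, Complex.real_smul] at ht
      have hfac : ((g (Sum.inl q) : ℂ) + (g (Sum.inr (Sum.inl q)) : ℂ) * Complex.I) *
          (((cc n q.1.1.1 q.1.1.2 : ℝ) : ℂ) / 2) = 0 := by linear_combination ht
      have hC : (((cc n q.1.1.1 q.1.1.2 : ℝ) : ℂ) / 2) ≠ 0 := by
        simp [Complex.ofReal_eq_zero, cc_ne_zero n _ hl]
      have h0 := (mul_eq_zero.1 hfac).resolve_right hC
      have := Complex.ext_iff.1 h0
      simp at this
      exact this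
    · -- n l = 0, so n k ≠ 0
      push_neg at hl
      have hk : n q.1.1.1 ≠ 0 := by
        rcases q.2 with h | h
        · exact h
        · exact absurd hl h
      have hlk : q.1.1.2 ≠ q.1.1.1 := Ne.symm hkl'
      have ht := key (Amap n q.1.1.2 q.1.1.1)
      rw [Fintype.sum_sum_type, Fintype.sum_sum_type] at ht
      simp only [wFam, Sum.elim_inl, Sum.elim_inr, Finset.univ_unique, Finset.sum_singleton] at ht
      rw [sum_single_support _ q (by
        intro q' hq'
        have h1 : q'.1.1.1 ≠ q'.1.1.2 := ne_of_lt q'.1.2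
        rw [eGen_eval n hlk hk h1, if_neg ne_swapped,
          if_neg (ne_ordered (fun h => hq' (Subtype.ext h)))]
        simp)] at ht
      rw [sum_single_support _ q (by
        intro q' hq'
        have h1 : q'.1.1.1 ≠ q'.1.1.2 := ne_of_lt q'.1.2
        rw [EGen_eval n hlk hk h1, if_neg ne_swapped,
          if_neg (ne_ordered (fun h => hq' (Subtype.ext h)))]
        simp)] at ht
      have hsw : ((q.1.1.1, q.1.1.2) : Fin m × Fin m) ≠ (q.1.1.2, q.1.1.1) := by
        intro h; injection h with h1 h2; exact hkl' h1
      rw [eGen_eval n hlk hk hkl', EGen_eval n hlk hk hkl', if_neg hsw, if_pos rfl] at ht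
      have hz : (fockState n) (Amap n q.1.1.2 q.1.1.1) = 0 := by
        rw [fockState, Finsupp.single_apply, if_neg (Ne.symm (Amap_ne n hlk hk))]
      rw [hz, smul_zero, add_zero] at ht
      rw [Complex.real_smul, Complex.real_smul] at ht
      have hfac : ((g (Sum.inl q) : ℂ) - (g (Sum.inr (Sum.inl q)) : ℂ) * Complex.I) *
          (((cc n q.1.1.2 q.1.1.1 : ℝ) : ℂ) / 2) = 0 := by linear_combination ht
      have hC : (((cc n q.1.1.2 q.1.1.1 : ℝ) : ℂ) / 2) ≠ 0 := by
        simp [Complex.ofReal_eq_zero, cc_ne_zero n _ hk]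
      have h0 := (mul_eq_zero.1 hfac).resolve_right hC
      have := Complex.ext_iff.1 h0
      simp at this
      exact this
  intro i
  match i with
  | Sum.inl q => exact (main q).1
  | Sum.inr (Sum.inl q) => exact (main q).2
  | Sum.inr (Sum.inr ()) =>
      have ht := key n
      rw [Fintype.sum_sum_type, Fintype.sum_sum_type] at ht
      simp only [wFam, Sum.elim_inl, Sum.elim_inr, Finset.univ_unique, Finset.sum_singleton] at ht
      rw [Finset.sum_eq_zero (fun q _ => by
            rw [eGen_eval_self n (ne_of_lt q.1.2), smul_zero]),
          Finset.sum_eq_zero (fun q _ => by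
            rw [EGen_eval_self n (ne_of_lt q.1.2), smul_zero]),
          zero_add, zero_add] at ht
      have h1 : (fockState n) n = 1 := by
        rw [fockState, Finsupp.single_apply, if_pos rfl]
      rw [h1, Complex.real_smul, mul_one] at ht
      exact_mod_cast ht



lemma eGen_zero (n : Fin m → ℕ) {k l : Fin m} (hkl : k ≠ l) (hk : n k = 0) (hl : n l = 0) :
    eGen k l (fockState n) = 0 := by
  rw [eGen_fock n hkl, cc_eq_zero n _ hl, cc_eq_zero n _ hk]
  simp

lemma EGen_zero (n : Fin m → ℕ) {k l : Fin m} (hkl : k ≠ l) (hk : n k = 0) (hl : n l = 0) :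
    EGen k l (fockState n) = 0 := by
  rw [EGen_fock n hkl, cc_eq_zero n _ hl, cc_eq_zero n _ hk]
  simp

lemma natCast_smul_eq (c : ℕ) (x : FockFin m) : ((c : ℕ) : ℂ) • x = ((c : ℕ) : ℝ) • x := by
  rw [← Complex.ofReal_natCast, ← Complex.coe_algebraMap, algebraMap_smul]

lemma span_eq (n : Fin m → ℕ) (hocc : ∃ k, n k ≠ 0) :
    Submodule.span ℝ (Set.range (orbitVectors n)) = Submodule.span ℝ (Set.range (wFam n)) := by
  apply le_antisymm
  · rw [Submodule.span_le]
    rintro x ⟨i, rfl⟩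
    match i with
    | Sum.inl p =>
        by_cases hp : occP n p.1
        · exact Submodule.subset_span ⟨Sum.inl ⟨p, hp⟩, rfl⟩
        · have hz : orbitVectors n (Sum.inl p) = 0 := by
            rw [occP] at hp
            push_neg at hp
            exact eGen_zero n (ne_of_lt p.2) hp.1 hp.2
          rw [hz]; exact Submodule.zero_mem _
    | Sum.inr (Sum.inl p) =>
        by_cases hp : occP n p.1
        · exact Submodule.subset_span ⟨Sum.inr (Sum.inl ⟨p, hp⟩), rfl⟩
        · have hz : orbitVectors n (Sum.inr (Sum.inl p)) = 0 := by
            rw [occP] at hp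
            push_neg at hp
            exact EGen_zero n (ne_of_lt p.2) hp.1 hp.2
          rw [hz]; exact Submodule.zero_mem _
    | Sum.inr (Sum.inr k) =>
        have hz : orbitVectors n (Sum.inr (Sum.inr k)) =
            ((n k : ℕ) : ℝ) • wFam n (Sum.inr (Sum.inr ())) := by
          show NGen k (fockState n) = ((n k : ℕ) : ℝ) • fockState n
          rw [NGen_fock, natCast_smul_eq]
        rw [hz]
        exact Submodule.smul_mem _ _ (Submodule.subset_span ⟨Sum.inr (Sum.inr ()), rfl⟩)
  · rw [Submodule.span_le]
    rintro x ⟨i, rfl⟩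
    match i with
    | Sum.inl q => exact Submodule.subset_span ⟨Sum.inl q.1, rfl⟩
    | Sum.inr (Sum.inl q) => exact Submodule.subset_span ⟨Sum.inr (Sum.inl q.1), rfl⟩
    | Sum.inr (Sum.inr ()) =>
        obtain ⟨k0, hk0⟩ := hocc
        have hz : wFam n (Sum.inr (Sum.inr ())) =
            ((n k0 : ℝ))⁻¹ • orbitVectors n (Sum.inr (Sum.inr k0)) := by
          show fockState n = ((n k0 : ℝ))⁻¹ • NGen k0 (fockState n)
          rw [NGen_fock, natCast_smul_eq, smul_smul, inv_mul_cancel₀ (by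
            exact_mod_cast hk0), one_smul]
        rw [hz]
        exact Submodule.smul_mem _ _ (Submodule.subset_span ⟨Sum.inr (Sum.inr k0), rfl⟩)

lemma card_SIdx_eq (n : Fin m → ℕ) :
    Fintype.card (SIdx n) =
      (Finset.univ.filter fun p : Fin m × Fin m => p.1 < p.2 ∧ occP n p).card := by
  rw [Fintype.card_congr
    (Equiv.subtypeSubtypeEquivSubtypeInter (fun p : Fin m × Fin m => p.1 < p.2) (occP n))]
  exact Fintype.card_subtype _

lemma two_mul_card_S (n : Fin m → ℕ) :
    2 * Fintype.card (SIdx n) + ((Finset.univ.filter fun i => n i = 0).offDiag).card =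
      ((Finset.univ : Finset (Fin m)).offDiag).card := by
  classical
  set Z := Finset.univ.filter fun i => n i = 0 with hZ
  set T1 := Finset.univ.filter fun p : Fin m × Fin m => p.1 < p.2 ∧ occP n p with hT1
  set T2 := Finset.univ.filter fun p : Fin m × Fin m => p.2 < p.1 ∧ occP n p with hT2
  have himg : T2 = T1.image Prod.swap := by
    ext ⟨a, b⟩
    simp only [hT1, hT2, Finset.mem_filter, Finset.mem_univ, true_and, Finset.mem_image,
      Prod.exists]
    constructor
    · rintro ⟨h1, h2⟩
      exact ⟨b, a, ⟨⟨h1, Or.symm h2⟩, rfl⟩⟩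
    · rintro ⟨c, d, ⟨h1, h2⟩, he⟩
      have hd : d = a := congrArg Prod.fst he
      have hc : c = b := congrArg Prod.snd he
      subst hd; subst hc
      exact ⟨h1, Or.symm h2⟩
  have hcard2 : T2.card = T1.card := by
    rw [himg, Finset.card_image_of_injective _ Prod.swap_injective]
  have hsplit := Finset.card_filter_add_card_filter_not
    (s := (Finset.univ : Finset (Fin m)).offDiag) (p := occP n)
  have hunion : (Finset.univ : Finset (Fin m)).offDiag.filter (occP n) = T1 ∪ T2 := by
    ext ⟨a, b⟩
    simp only [hT1, hT2, Finset.mem_filter, Finset.mem_offDiag, Finset.mem_univ, true_and,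
      Finset.mem_union, ne_eq]
    constructor
    · rintro ⟨h1, h2⟩
      rcases lt_or_gt_of_ne h1 with h | h
      · exact Or.inl ⟨h, h2⟩
      · exact Or.inr ⟨h, h2⟩
    · rintro (⟨h1, h2⟩ | ⟨h1, h2⟩)
      · exact ⟨ne_of_lt h1, h2⟩
      · exact ⟨ne_of_gt h1, h2⟩
  have hneg : (Finset.univ : Finset (Fin m)).offDiag.filter (fun p => ¬ occP n p) = Z.offDiag := by
    ext ⟨a, b⟩
    simp only [hZ, Finset.mem_filter, Finset.mem_offDiag, Finset.mem_univ, true_and, occP,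
      ne_eq, not_or, not_not]
    tauto
  have hdisj : Disjoint T1 T2 := by
    rw [Finset.disjoint_left]
    intro p h1 h2
    rw [hT1, Finset.mem_filter] at h1
    rw [hT2, Finset.mem_filter] at h2
    exact lt_asymm h1.2.1 h2.2.1
  have hu : ((Finset.univ : Finset (Fin m)).offDiag.filter (occP n)).card = T1.card + T2.card := by
    rw [hunion, Finset.card_union_of_disjoint hdisj]
  rw [card_SIdx_eq n, ← hT1]
  rw [hneg] at hsplit
  omega


end Scratch

open Scratch in
theorem fock_state_orbit_dimension {m : ℕ} (n : Fin m → ℕ) (u : ℕ)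
    (hu : u = (Finset.univ.filter fun i => n i = 0).card) :
    Module.finrank ℝ (Submodule.span ℝ (Set.range (orbitVectors n))) =
      m * (m - 1) - u * (u - 1) + (if u ≠ m then 1 else 0) := by

  have e1 : ∀ x : ℕ, x * (x - 1) = x * x - x := by
    intro x
    cases x with
    | zero => simp
    | succ k => rw [Nat.succ_sub_one, Nat.mul_succ, Nat.add_sub_cancel]
  by_cases hocc : ∃ k, n k ≠ 0
  · have hum : u ≠ m := by
      intro he
      have hcard : (Finset.univ.filter fun i => n i = 0).card = Fintype.card (Fin m) := by
        rw [← hu, he, Fintype.card_fin]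
      have huniv := Finset.eq_univ_of_card _ hcard
      obtain ⟨k, hk⟩ := hocc
      have hmem : k ∈ Finset.univ.filter fun i => n i = 0 := by
        rw [huniv]; exact Finset.mem_univ k
      rw [Finset.mem_filter] at hmem
      exact hk hmem.2
    rw [span_eq n hocc, finrank_span_eq_card (wFam_indep n), if_pos hum]
    have hcidx : Fintype.card (Idx n) = 2 * Fintype.card (SIdx n) + 1 := by
      rw [Fintype.card_sum, Fintype.card_sum, Fintype.card_unit]
      ring
    rw [hcidx]
    have h2 := two_mul_card_S n
    rw [Finset.offDiag_card, Finset.offDiag_card, Finset.card_univ, Fintype.card_fin, ← hu] at h2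
    rw [e1 m, e1 u]
    generalize hA : m * m = A at h2 ⊢
    generalize hB : u * u = B at h2 ⊢
    omega
  · push_neg at hocc
    have hum : u = m := by
      rw [hu, Finset.filter_true_of_mem (fun i _ => hocc i), Finset.card_univ, Fintype.card_fin]
    have hspan : Submodule.span ℝ (Set.range (orbitVectors n)) = ⊥ := by
      rw [Submodule.span_eq_bot]
      rintro x ⟨i, rfl⟩
      match i with
      | Sum.inl p => exact eGen_zero n (ne_of_lt p.2) (hocc _) (hocc _)
      | Sum.inr (Sum.inl p) => exact EGen_zero n (ne_of_lt p.2) (hocc _) (hocc _)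
      | Sum.inr (Sum.inr k) =>
          show NGen k (fockState n) = 0
          rw [NGen_fock, hocc k]
          simp
    rw [hspan, hum]
    simp
end
end

section
/- Suppose |ψ⟩ and |φ⟩ are unit vectors in a finite-dimensional complex Hilbert space V, G ⊆ U(V) is a subgroup, and the real ranks of the lists {H_1|ψ⟩,…,H_d|ψ⟩} and {H_1|φ⟩,…,H_d|φ⟩} differ, where i·H_1,…,i·H_d is a basis of the Lie algebra 𝔤 of G. Then there is no U ∈ G with U|ψ⟩ = |φ⟩. -/
/-!
STATEMENT 18: let `G ⊆ U(V)` be a (closed, connected) subgroup of the unitary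
group of a finite-dimensional complex Hilbert space `V`, whose Lie algebra
`𝔤 = {A : e^{tA} ∈ G ∀ t}` has real basis `{iH_1, …, iH_d}` with each `H_j`
self-adjoint. If the real ranks of `{H_1|ψ⟩, …, H_d|ψ⟩}` and
`{H_1|φ⟩, …, H_d|φ⟩}` differ for unit vectors `ψ, φ`, then no `U ∈ G` sends
`|ψ⟩` to `|φ⟩`.
-/

noncomputable section

/-- The concrete Lie algebra `𝔤 = {A : e^{tA} ∈ G for all t ∈ ℝ}` of a subgroup
`G` of the unitary group of `V`. -/
def unitaryLieAlgebra {V : Type*} [NormedAddCommGroup V] [InnerProductSpace ℂ V]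
    [FiniteDimensional ℂ V] (G : Subgroup ↥(unitary (V →L[ℂ] V))) :
    Set (V →L[ℂ] V) :=
  {A | ∀ t : ℝ, ∃ g ∈ G, ((g : ↥(unitary (V →L[ℂ] V))) : V →L[ℂ] V)
    = NormedSpace.exp (t • A)}

section Aux

variable {V : Type*} [NormedAddCommGroup V] [InnerProductSpace ℂ V] [FiniteDimensional ℂ V]

/-- evaluation at ψ as an ℝ-linear map -/
def evR (ψ : V) : (V →L[ℂ] V) →ₗ[ℝ] V where
  toFun A := A ψ
  map_add' _ _ := rfl
  map_smul' _ _ := rfl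

/-- conjugation A ↦ u * A * w as an ℝ-linear map -/
def conjR (u w : V →L[ℂ] V) : (V →L[ℂ] V) →ₗ[ℝ] (V →L[ℂ] V) where
  toFun A := u * A * w
  map_add' _ _ := by noncomm_ring
  map_smul' _ _ := by simp [mul_smul_comm, smul_mul_assoc]

/-- multiplication by I as a real-linear equivalence -/
def mIEquiv : V ≃ₗ[ℝ] V :=
  LinearEquiv.ofLinear
    { toFun := fun v => Complex.I • v
      map_add' := fun v w => smul_add _ v w
      map_smul' := fun r v => smul_comm Complex.I r v }
    { toFun := fun v => (-Complex.I) • v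
      map_add' := fun v w => smul_add _ v w
      map_smul' := fun r v => smul_comm (-Complex.I) r v }
    (by ext v; simp [smul_smul])
    (by ext v; simp [smul_smul])

lemma conj_mem_lie (G : Subgroup ↥(unitary (V →L[ℂ] V))) (U : ↥(unitary (V →L[ℂ] V)))
    (hU : U ∈ G) {A : V →L[ℂ] V} (hA : A ∈ unitaryLieAlgebra G) :
    (U : V →L[ℂ] V) * A * star (U : V →L[ℂ] V) ∈ unitaryLieAlgebra G := by
  intro t
  obtain ⟨g, hg, hge⟩ := hA t
  refine ⟨U * g * U⁻¹, mul_mem (mul_mem hU hg) (inv_mem hU), ?_⟩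
  have key : NormedSpace.exp
      ((Unitary.toUnits U : V →L[ℂ] V) * (t • A) * ((Unitary.toUnits U)⁻¹ : (V →L[ℂ] V)ˣ))
      = (Unitary.toUnits U : V →L[ℂ] V) * NormedSpace.exp (t • A)
        * ((Unitary.toUnits U)⁻¹ : (V →L[ℂ] V)ˣ) :=
    by let +nondep : NormedAlgebra ℚ (V →L[ℂ] V) := .restrictScalars ℚ ℂ (V →L[ℂ] V); exact NormedSpace.exp_units_conj _ _
  have h1 : ((Unitary.toUnits U)⁻¹ : (V →L[ℂ] V)ˣ) = star (U : V →L[ℂ] V) := rfl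
  have h2 : (Unitary.toUnits U : V →L[ℂ] V) = (U : V →L[ℂ] V) := rfl
  rw [h1, h2] at key
  have hs : t • ((U : V →L[ℂ] V) * A * star (U : V →L[ℂ] V))
      = (U : V →L[ℂ] V) * (t • A) * star (U : V →L[ℂ] V) := by
    simp [mul_smul_comm, smul_mul_assoc]
  rw [hs, key, ← hge]
  rfl

end Aux

theorem no_unitary_in_G_of_rank_ne {V : Type*}
    [NormedAddCommGroup V] [InnerProductSpace ℂ V] [FiniteDimensional ℂ V]
    (G : Subgroup ↥(unitary (V →L[ℂ] V)))
    (hGclosed : IsClosed (G : Set ↥(unitary (V →L[ℂ] V))))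
    (hGconn : IsConnected (G : Set ↥(unitary (V →L[ℂ] V))))
    (d : ℕ) (H : Fin d → (V →L[ℂ] V))
    (hsa : ∀ j, IsSelfAdjoint (H j))
    -- `{iH_1, …, iH_d}` is a real basis of `𝔤`:
    (hmem : ∀ j, (Complex.I • H j) ∈ unitaryLieAlgebra G)
    (hind : LinearIndependent ℝ fun j => Complex.I • H j)
    (hspan : Submodule.span ℝ (Set.range fun j => Complex.I • H j)
      = Submodule.span ℝ (unitaryLieAlgebra G))
    (ψ φ : V) (hψ : ‖ψ‖ = 1) (hφ : ‖φ‖ = 1)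
    (hrank : Module.finrank ℝ (Submodule.span ℝ (Set.range fun j => H j ψ))
      ≠ Module.finrank ℝ (Submodule.span ℝ (Set.range fun j => H j φ))) :
    ∀ U ∈ G, ((U : ↥(unitary (V →L[ℂ] V))) : V →L[ℂ] V) ψ ≠ φ := by
  intro U hU hUψ
  set u : V →L[ℂ] V := (U : V →L[ℂ] V) with hu
  set su : V →L[ℂ] V := star u with hsu
  have husu : u * su = 1 := Unitary.coe_mul_star_self U
  have hsuu : su * u = 1 := Unitary.coe_star_mul_self U
  set W := Submodule.span ℝ (unitaryLieAlgebra G) with hW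
  -- the span of evaluations equals the image of W under evaluation
  have hsp : ∀ v : V, Submodule.span ℝ (Set.range fun j => (Complex.I • H j) v)
      = Submodule.map (evR v) W := by
    intro v
    rw [← hspan, Submodule.map_span, ← Set.range_comp]
    rfl
  -- finrank invariance under multiplication by I
  have hI : ∀ v : V, Module.finrank ℝ (Submodule.span ℝ (Set.range fun j => H j v))
      = Module.finrank ℝ (Submodule.span ℝ (Set.range fun j => (Complex.I • H j) v)) := by
    intro v
    have hr : (Set.range fun j => (Complex.I • H j) v)
        = ((mIEquiv (V := V) : V →ₗ[ℝ] V)) '' (Set.range fun j => H j v) := by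
      rw [← Set.range_comp]; rfl
    rw [hr, ← Submodule.map_span, LinearEquiv.finrank_map_eq]
  -- conjugation by elements of G preserves W
  have hconj : ∀ U' : ↥(unitary (V →L[ℂ] V)), U' ∈ G →
      Submodule.map (conjR (U' : V →L[ℂ] V) (star (U' : V →L[ℂ] V))) W ≤ W := by
    intro U' hU'
    rw [hW, Submodule.map_span]
    apply Submodule.span_mono
    rintro _ ⟨A, hA, rfl⟩
    exact conj_mem_lie G U' hU' hA
  have h1 : Submodule.map (conjR su u) W ≤ W := by
    have h2 : Submodule.map (conjR su (star su)) W ≤ W := hconj U⁻¹ (inv_mem hU)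
    rwa [hsu, star_star] at h2
  have h3 : Submodule.map (conjR su u) W = W := by
    refine le_antisymm h1 ?_
    have hid : (conjR su u : (V →L[ℂ] V) →ₗ[ℝ] (V →L[ℂ] V)) ∘ₗ conjR u su = LinearMap.id := by
      refine LinearMap.ext fun A => ?_
      show su * (u * A * su) * u = A
      calc su * (u * A * su) * u = (su * u) * A * (su * u) := by noncomm_ring
        _ = A := by rw [hsuu, one_mul, mul_one]
    calc W = Submodule.map ((conjR su u : (V →L[ℂ] V) →ₗ[ℝ] (V →L[ℂ] V)) ∘ₗ conjR u su) W := by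
            rw [hid, Submodule.map_id]
      _ = Submodule.map (conjR su u) (Submodule.map (conjR u su) W) := Submodule.map_comp _ _ _
      _ ≤ Submodule.map (conjR su u) W := Submodule.map_mono (hconj U hU)
  -- U as a real-linear equivalence
  have hcompuv : ∀ v : V, u (su v) = v := by
    intro v
    have := congrArg (fun f : V →L[ℂ] V => f v) husu
    simpa using this
  have hcompvu : ∀ v : V, su (u v) = v := by
    intro v
    have := congrArg (fun f : V →L[ℂ] V => f v) hsuu
    simpa using this
  set eU : V ≃ₗ[ℝ] V := LinearEquiv.ofLinear
    ((u.toLinearMap).restrictScalars ℝ) ((su.toLinearMap).restrictScalars ℝ)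
    (by ext v; exact hcompuv v) (by ext v; exact hcompvu v) with heU
  -- key identity: evR φ = eU ∘ evR ψ ∘ conjR su u
  have hkey : evR φ = (eU : V →ₗ[ℝ] V) ∘ₗ ((evR ψ) ∘ₗ conjR su u) := by
    refine LinearMap.ext fun A => ?_
    show A φ = u ((su * A * u) ψ)
    have : u * (su * A * u) = A * u := by
      calc u * (su * A * u) = (u * su) * A * u := by noncomm_ring
        _ = A * u := by rw [husu, one_mul]
    calc A φ = A (u ψ) := by rw [hUψ]
      _ = (A * u) ψ := rfl
      _ = (u * (su * A * u)) ψ := by rw [this]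
      _ = u ((su * A * u) ψ) := rfl
  have main : Module.finrank ℝ (Submodule.map (evR φ) W)
      = Module.finrank ℝ (Submodule.map (evR ψ) W) := by
    rw [hkey, Submodule.map_comp, Submodule.map_comp, h3, LinearEquiv.finrank_map_eq]
  exact hrank (by rw [hI ψ, hI φ, hsp ψ, hsp φ, main])
end
end
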